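/- In the game saliquant, if p and q are odd primes, then SG(2pq) is one of the four values pq − 1, pq − (p + 1)/2, pq − (q + 1)/2, and (pq − 1)/2. -/
import Mathlib


/-- Sprague–Grundy values for the game saliquant: the options of a position `n`
are the positions `n - k` where `1 ≤ k ≤ n` and `k` does not divide `n`, and
`sg n` is the least nonnegative integer not among the values of the options. -/
noncomputable def sg : ℕ → ℕ
  | n => sInf {m : ℕ | ∀ k, 1 ≤ k → k ≤ n → ¬ k ∣ n → sg (n - k) ≠ m}
decreasing_by omega

lemma sg_eq (n : ℕ) :
    sg n = sInf {m : ℕ | ∀ k, 1 ≤ k → k ≤ n → ¬ k ∣ n → sg (n - k) ≠ m} := by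
  rw [sg]

lemma sg_main : ∀ n : ℕ, (∀ t, n = 2*t+1 → sg n = t) ∧ (∀ t, n = 2*t → 1 ≤ t → sg n ≤ t - 1) := by
  intro n
  induction n using Nat.strong_induction_on with
  | _ n ih =>
    constructor
    · rintro t rfl
      have hmem : t ∈ {m : ℕ | ∀ k, 1 ≤ k → k ≤ 2*t+1 → ¬ k ∣ (2*t+1) → sg (2*t+1 - k) ≠ m} := by
        intro k hk1 hk2 hkd
        have hk2' : 2 ≤ k := by
          rcases Nat.lt_or_ge k 2 with h | h
          · exfalso; have hk : k = 1 := by omega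
            exact hkd (by rw [hk]; exact one_dvd _)
          · exact h
        rcases Nat.even_or_odd k with hke | hko
        · obtain ⟨j, rfl⟩ := hke
          have hj1 : 1 ≤ j := by omega
          have hj : j ≤ t := by omega
          have he : 2*t+1 - (j+j) = 2*(t-j)+1 := by omega
          rw [he, (ih (2*(t-j)+1) (by omega)).1 (t-j) rfl]
          omega
        · obtain ⟨j, rfl⟩ := hko
          have hj1 : 1 ≤ j := by omega
          have hjt : j < t := by
            rcases Nat.lt_or_ge j t with h | h
            · exact h
            · exfalso; have : 2*j+1 = 2*t+1 := by omega
              exact hkd (this ▸ dvd_refl _)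
          have he : 2*t+1 - (2*j+1) = 2*(t-j) := by omega
          rw [he]
          have := (ih (2*(t-j)) (by omega)).2 (t-j) rfl (by omega)
          omega
      have hle : sg (2*t+1) ≤ t := by rw [sg_eq]; exact Nat.sInf_le hmem
      rcases Nat.lt_or_ge (sg (2*t+1)) t with hlt | hge
      · exfalso
        have hne : ({m : ℕ | ∀ k, 1 ≤ k → k ≤ 2*t+1 → ¬ k ∣ (2*t+1) → sg (2*t+1 - k) ≠ m} : Set ℕ).Nonempty := ⟨t, hmem⟩
        have hsmem := Nat.sInf_mem hne
        rw [← sg_eq] at hsmem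
        set g := sg (2*t+1) with hg
        have hkd : ¬ (2*(t-g)) ∣ (2*t+1) := by
          intro h
          have : (2:ℕ) ∣ 2*t+1 := dvd_trans ⟨t-g, rfl⟩ h
          omega
        have := hsmem (2*(t-g)) (by omega) (by omega) hkd
        have he : 2*t+1 - 2*(t-g) = 2*g+1 := by omega
        rw [he, (ih (2*g+1) (by omega)).1 g rfl] at this
        exact this rfl
      · omega
    · rintro t rfl ht
      have hmem : t-1 ∈ {m : ℕ | ∀ k, 1 ≤ k → k ≤ 2*t → ¬ k ∣ (2*t) → sg (2*t - k) ≠ m} := by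
        intro k hk1 hk2 hkd
        have hk2' : 2 ≤ k := by
          rcases Nat.lt_or_ge k 2 with h | h
          · exfalso; have hk : k = 1 := by omega
            exact hkd (by rw [hk]; exact one_dvd _)
          · exact h
        rcases Nat.even_or_odd k with hke | hko
        · obtain ⟨j, rfl⟩ := hke
          have hj1 : 1 ≤ j := by omega
          have hjt : j < t := by
            rcases Nat.lt_or_ge j t with h | h
            · exact h
            · exfalso; have : j + j = 2*t := by omega
              exact hkd (this ▸ dvd_refl _)
          have he : 2*t - (j+j) = 2*(t-j) := by omega
          rw [he]
          have := (ih (2*(t-j)) (by omega)).2 (t-j) rfl (by omega)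
          omega
        · obtain ⟨j, rfl⟩ := hko
          have hj1 : 1 ≤ j := by omega
          have hjt : j ≤ t - 1 := by omega
          have he : 2*t - (2*j+1) = 2*(t-j-1)+1 := by omega
          rw [he, (ih (2*(t-j-1)+1) (by omega)).1 (t-j-1) rfl]
          omega
      rw [sg_eq]; exact Nat.sInf_le hmem

lemma sg_odd (t : ℕ) : sg (2*t+1) = t := (sg_main (2*t+1)).1 t rfl

lemma sg_even (t : ℕ) (ht : 1 ≤ t) : sg (2*t) ≤ t - 1 := (sg_main (2*t)).2 t rfl ht

lemma sg_le (x : ℕ) : sg x ≤ x / 2 := by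
  rcases Nat.even_or_odd x with ⟨t, rfl⟩ | ⟨t, rfl⟩
  · have h2 : t + t = 2 * t := by omega
    rcases Nat.eq_zero_or_pos t with rfl | ht
    · rw [sg_eq]
      have h0 : (0:ℕ) ∈ {m : ℕ | ∀ k, 1 ≤ k → k ≤ 0 + 0 → ¬ k ∣ (0 + 0) → sg (0 + 0 - k) ≠ m} := by
        intro k hk1 hk2 _; omega
      have := Nat.sInf_le h0
      omega
    · rw [h2]
      have := sg_even t ht
      omega
  · have := sg_odd t
    omega

theorem saliquant_double_semiprime (p q : ℕ) (hp : p.Prime) (hq : q.Prime)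
    (hpodd : Odd p) (hqodd : Odd q) :
    sg (2 * (p * q)) = p * q - 1 ∨
    sg (2 * (p * q)) = p * q - (p + 1) / 2 ∨
    sg (2 * (p * q)) = p * q - (q + 1) / 2 ∨
    sg (2 * (p * q)) = (p * q - 1) / 2 := by
  set m := p * q with hm
  have hp3 : 3 ≤ p := by
    have := hp.two_le
    rcases Nat.eq_or_lt_of_le this with h | h
    · exfalso; rw [← h] at hpodd; exact (Nat.not_odd_iff_even.mpr (by decide)) hpodd
    · omega
  have hq3 : 3 ≤ q := by
    have := hq.two_le
    rcases Nat.eq_or_lt_of_le this with h | h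
    · exfalso; rw [← h] at hqodd; exact (Nat.not_odd_iff_even.mpr (by decide)) hqodd
    · omega
  have hmodd : Odd m := hpodd.mul hqodd
  have hm9 : 9 ≤ m := by
    have := Nat.mul_le_mul hp3 hq3
    omega
  -- g ≤ m - 1
  have hgle : sg (2 * m) ≤ m - 1 := sg_even m (by omega)
  -- g is in the defining set
  have hwit : m ∈ {v : ℕ | ∀ k, 1 ≤ k → k ≤ 2*m → ¬ k ∣ (2*m) → sg (2*m - k) ≠ v} := by
    intro k hk1 hk2 _
    have := sg_le (2*m - k)
    omega
  have hne : ({v : ℕ | ∀ k, 1 ≤ k → k ≤ 2*m → ¬ k ∣ (2*m) → sg (2*m - k) ≠ v} : Set ℕ).Nonempty :=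
    ⟨m, hwit⟩
  have hsmem := Nat.sInf_mem hne
  have hg : sg (2 * m) = sInf {v : ℕ | ∀ k, 1 ≤ k → k ≤ 2*m → ¬ k ∣ (2*m) → sg (2*m - k) ≠ v} :=
    sg_eq (2*m)
  rw [← hg] at hsmem
  set g := sg (2 * m) with hgdef
  set j := m - g with hj
  have hj1 : 1 ≤ j := by omega
  have hjm : j ≤ m := by omega
  have hgmj : g = m - j := by omega
  -- claim 2j-1 divides m
  have hdvd : (2*j - 1) ∣ m := by
    by_contra hnd
    have hodd : ¬ (2:ℕ) ∣ (2*j-1) := by omega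
    have hkd : ¬ (2*j-1) ∣ (2*m) := by
      intro h
      have hcop : Nat.Coprime (2*j-1) 2 :=
        Nat.coprime_two_right.mpr ⟨j-1, by omega⟩
      exact hnd (hcop.dvd_of_dvd_mul_left h)
    have := hsmem (2*j-1) (by omega) (by omega) hkd
    have he : 2*m - (2*j-1) = 2*(m-j)+1 := by omega
    rw [he, sg_odd (m-j)] at this
    omega
  -- divisors of p*q
  rw [hm] at hdvd
  rcases (Nat.dvd_mul.mp hdvd) with ⟨d1, d2, hd1, hd2, hprod⟩
  rcases (Nat.Prime.eq_one_or_self_of_dvd hp d1 hd1) with rfl | rfl <;>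
  rcases (Nat.Prime.eq_one_or_self_of_dvd hq d2 hd2) with rfl | rfl
  · left; omega
  · right; right; left; omega
  · right; left; omega
  · right; right; right
    have : 2*j - 1 = m := by rw [hm]; omega
    omega
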